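/- In the slot-sequential choice rule C̄, adding a contract z to an offer set Y changes the selection at each slot in a controlled way: at every slot index j, the remaining set in the process on Y ∪ {z} equals the remaining set in the process on Y, possibly together with exactly one extra contract. -/

import Mathlib

open Finset
variable {X : Type*} [DecidableEq X] [Fintype X]

/-- From an offer set `Y`, select the `π`-maximal element of `Y ∪ {∅}`
(`none` plays the role of the null contract; higher `π`-value = higher priority). -/
noncomputable def pick (π : Option X → ℕ) (Y : Finset X) : Option X :=
  (((insert (none : Option X) (Y.image some)).toList).argmax π).join

/-- Slot-sequential choice: each slot selects the priority-maximal remaining contract. -/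
noncomputable def chosen : List (Option X → ℕ) → Finset X → Finset X
  | [], _ => ∅
  | π :: L, Y =>
    match pick π Y with
    | none => chosen L Y
    | some x => insert x (chosen L (Y.erase x))

/-- Remaining contracts after all slots in the list have selected. -/
noncomputable def remain : List (Option X → ℕ) → Finset X → Finset X
  | [], Y => Y
  | π :: L, Y =>
    match pick π Y with
    | none => remain L Y
    | some x => remain L (Y.erase x)


/-!
A slot with injective priority facing `insert w Y` either takes `w`, and then leaves exactly
what `Y` leaves plus whatever it would have taken from `Y`, or it takes the same option as from
`Y`, and then `w` survives as the only extra contract. So the relation "equal, or one fresh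
contract more" is preserved slot by slot.
-/

section

omit [Fintype X]

def withNull (Y : Finset X) : Finset (Option X) :=
  insert none (Y.image some)

lemma withNull_insert (w : X) (Y : Finset X) :
    withNull (insert w Y) = insert (some w) (withNull Y) := by
  rw [withNull, withNull, image_insert, insert_comm]

lemma pick_spec (π : Option X → ℕ) (Y : Finset X) :
    pick π Y ∈ withNull Y ∧ ∀ a ∈ withNull Y, π a ≤ π (pick π Y) := by
  obtain ⟨m, hm⟩ : ∃ m, ((withNull Y).toList).argmax π = some m := by
    rw [← Option.ne_none_iff_exists', Ne, List.argmax_eq_none, toList_eq_nil]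
    exact insert_ne_empty _ _
  have hpick : pick π Y = m := by rw [pick, ← withNull, hm, Option.join_some]
  rw [hpick]
  refine ⟨mem_toList.1 (List.argmax_mem hm), fun a ha => ?_⟩
  exact List.le_of_mem_argmax (mem_toList.2 ha) hm

lemma mem_of_pick_eq_some {π : Option X → ℕ} {Y : Finset X} {x : X} (h : pick π Y = some x) :
    x ∈ Y := by
  have hmem := (pick_spec π Y).1
  rw [h, withNull, mem_insert, mem_image] at hmem
  simpa using hmem

lemma pick_eq_of_forall_le {π : Option X → ℕ} (hπ : Function.Injective π) {Y : Finset X}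
    {o : Option X} (ho : o ∈ withNull Y) (hmax : ∀ a ∈ withNull Y, π a ≤ π o) :
    pick π Y = o :=
  hπ (le_antisymm (hmax _ (pick_spec π Y).1) ((pick_spec π Y).2 o ho))

lemma pick_insert_of_ne {π : Option X → ℕ} (hπ : Function.Injective π) {Y : Finset X} {w : X}
    (h : pick π (insert w Y) ≠ some w) : pick π (insert w Y) = pick π Y := by
  obtain ⟨hmem, hmax⟩ := pick_spec π (insert w Y)
  rw [withNull_insert] at hmem hmax
  refine (pick_eq_of_forall_le hπ ((mem_insert.1 hmem).resolve_left h) ?_).symm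
  exact fun a ha => hmax a (mem_insert_of_mem ha)

noncomputable def afterPick (π : Option X → ℕ) (Y : Finset X) : Finset X :=
  (pick π Y).elim Y Y.erase

lemma remain_cons (π : Option X → ℕ) (L : List (Option X → ℕ)) (Y : Finset X) :
    remain (π :: L) Y = remain L (afterPick π Y) := by
  cases h : pick π Y <;> simp [remain, afterPick, h]

def EqOrInsertFresh (A' A : Finset X) : Prop :=
  A' = A ∨ ∃ w ∉ A, A' = insert w A

lemma eqOrInsertFresh_afterPick {π : Option X → ℕ} (hπ : Function.Injective π) {A' A : Finset X}
    (h : EqOrInsertFresh A' A) : EqOrInsertFresh (afterPick π A') (afterPick π A) := by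
  obtain rfl | ⟨w, hw, rfl⟩ := h
  · exact Or.inl rfl
  by_cases hpw : pick π (insert w A) = some w
  · have hstep : afterPick π (insert w A) = A := by simp [afterPick, hpw, erase_insert hw]
    rw [hstep]
    cases hpA : pick π A with
    | none => left; simp [afterPick, hpA]
    | some x =>
      refine Or.inr ⟨x, by simp [afterPick, hpA], ?_⟩
      simp [afterPick, hpA, insert_erase (mem_of_pick_eq_some hpA)]
  · have hp := pick_insert_of_ne hπ hpw
    cases hpA : pick π A with
    | none => exact Or.inr ⟨w, by simpa [afterPick, hpA], by simp [afterPick, hp, hpA]⟩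
    | some x =>
      have hxw : x ≠ w := fun hxw => hw (hxw ▸ mem_of_pick_eq_some hpA)
      refine Or.inr ⟨w, by simp [afterPick, hpA, hw], ?_⟩
      simp [afterPick, hp, hpA, erase_insert_of_ne hxw.symm]

lemma eqOrInsertFresh_remain {L : List (Option X → ℕ)} (hL : ∀ π ∈ L, Function.Injective π)
    {A' A : Finset X} (h : EqOrInsertFresh A' A) :
    EqOrInsertFresh (remain L A') (remain L A) := by
  induction L generalizing A' A with
  | nil => exact h
  | cons π L ih =>
    rw [remain_cons, remain_cons]
    exact ih (fun π' hπ' => hL π' (List.mem_cons_of_mem _ hπ'))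
      (eqOrInsertFresh_afterPick (hL π List.mem_cons_self) h)

end

/-- Adding one contract changes the remaining set after each slot by at most one
extra contract. -/
theorem remain_insert (L : List (Option X → ℕ)) (hinj : ∀ π ∈ L, Function.Injective π)
    (Y : Finset X) (z : X) (hz : z ∉ Y) (j : ℕ) :
    remain (L.take j) (insert z Y) = remain (L.take j) Y ∨
      ∃ w, w ∉ remain (L.take j) Y ∧
        remain (L.take j) (insert z Y) = insert w (remain (L.take j) Y) :=
  eqOrInsertFresh_remain (fun π hπ => hinj π (List.mem_of_mem_take hπ)) (Or.inr ⟨z, hz, rfl⟩)
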